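/- arXiv:1006.1887 — 5 statements merged into one kernel-verified Lean document; each statement's English description precedes it below -/
import Mathlib

section
/- Let λ=(λ₁≥⋯≥λ_ℓ>0) be a partition and b=(b₁,…,b_ℓ) a vector of positive integers. Then the following identity holds in ℤ[q]: ∑_{U∈SetSSYT(λ,b)} (q−1)^{ex(U)} = ∑_{T∈SSYT(λ,b)} q^{depth(T)}. (This is the combinatorial identity underlying the paper's formula for the h-polynomial H_{v,w}(q) of covexillary Schubert varieties.) -/
open scoped Classical

noncomputable section

namespace DriftKL

/-- `(i,j)` is a box of the Young diagram of `lam` (French notation, rows indexed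
bottom-to-top, everything 1-indexed). -/
def InShape (lam : ℕ → ℕ) (i j : ℕ) : Prop := 1 ≤ i ∧ 1 ≤ j ∧ j ≤ lam i

/-- `lam` encodes a partition `λ₁ ≥ ⋯ ≥ λ_ℓ > 0` (1-indexed; `0` outside `[1,ℓ]`). -/
def IsPartitionFun (ℓ : ℕ) (lam : ℕ → ℕ) : Prop :=
  (∀ i, 1 ≤ i → i ≤ ℓ → 1 ≤ lam i) ∧
  (∀ i j, 1 ≤ i → i ≤ j → j ≤ ℓ → lam j ≤ lam i) ∧
  (∀ i, i = 0 ∨ ℓ < i → lam i = 0)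

/-- The Finset of boxes of the Young diagram of `lam`. -/
def shapeBoxes (ℓ : ℕ) (lam : ℕ → ℕ) : Finset (ℕ × ℕ) :=
  (Finset.Icc 1 ℓ ×ˢ Finset.Icc 1 (lam 1)).filter (fun p => p.2 ≤ lam p.1)

/-- Semistandardness: positive entries, rows weakly increase left-to-right,
columns strictly increase bottom-to-top. -/
def IsSSYT (lam : ℕ → ℕ) (T : ℕ → ℕ → ℕ) : Prop :=
  (∀ i j, InShape lam i j → 1 ≤ T i j) ∧
  (∀ i j, InShape lam i j → InShape lam i (j+1) → T i j ≤ T i (j+1)) ∧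
  (∀ i j, InShape lam i j → InShape lam (i+1) j → T i j < T (i+1) j)

/-- Flagged semistandard Young tableaux of shape `lam`, flagged by `b`,
represented as functions vanishing off the shape. -/
def SSYTset (lam b : ℕ → ℕ) : Set (ℕ → ℕ → ℕ) :=
  {T | IsSSYT lam T ∧ (∀ i j, InShape lam i j → T i j ≤ b i) ∧
       (∀ i j, ¬ InShape lam i j → T i j = 0)}

/-- Boundary convention: `T(i,0) = 1` for `i > 0`, and `T(0,j) = 0`. -/
def TxC (T : ℕ → ℕ → ℕ) (i j : ℕ) : ℕ :=
  if i = 0 then 0 else if j = 0 then 1 else T i j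

/-- The saturation `sat(T)`: `sat(T)(i,j) = [max{T(i,j-1), 1+T(i-1,j)}, T(i,j)]`. -/
def satF (lam : ℕ → ℕ) (T : ℕ → ℕ → ℕ) (i j : ℕ) : Finset ℕ :=
  if InShape lam i j then
    Finset.Icc (max (TxC T i (j - 1)) (TxC T (i - 1) j + 1)) (T i j)
  else ∅

/-- `depth(T) = |sat(T)| - |λ|`. -/
def depthT (ℓ : ℕ) (lam : ℕ → ℕ) (T : ℕ → ℕ → ℕ) : ℕ :=
  (∑ p ∈ shapeBoxes ℓ lam, (satF lam T p.1 p.2).card) - (shapeBoxes ℓ lam).card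

/-- Flagged set-valued semistandard fillings: each box carries a nonempty finite
set of positive integers bounded by the flag, such that every choice of one entry
per box is semistandard.  Off the shape the value is `∅`. -/
def SetSSYTset (lam b : ℕ → ℕ) : Set (ℕ → ℕ → Finset ℕ) :=
  {U | (∀ i j, InShape lam i j → (U i j).Nonempty) ∧
       (∀ i j, ¬ InShape lam i j → U i j = ∅) ∧
       (∀ i j, InShape lam i j → ∀ x ∈ U i j, 1 ≤ x ∧ x ≤ b i) ∧
       (∀ T : ℕ → ℕ → ℕ, (∀ i j, InShape lam i j → T i j ∈ U i j) →
          (∀ i j, InShape lam i j → InShape lam i (j+1) → T i j ≤ T i (j+1)) ∧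
          (∀ i j, InShape lam i j → InShape lam (i+1) j → T i j < T (i+1) j))}

/-- `ex(U) = |U| - |λ|`. -/
def exU (ℓ : ℕ) (lam : ℕ → ℕ) (U : ℕ → ℕ → Finset ℕ) : ℕ :=
  (∑ p ∈ shapeBoxes ℓ lam, (U p.1 p.2).card) - (shapeBoxes ℓ lam).card

end DriftKL

/-! Sending a set-valued tableau `U` to the tableau `maxFill U` of its largest entries maps
`SetSSYT(λ,b)` to `SSYT(λ,b)`. The lower end of `sat(T)(i,j)` is the least value that may
replace `T(i,j)` while keeping the entries of the left and lower neighbours, so the fibre over `T`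
consists exactly of the fillings with `T(i,j) ∈ U(i,j) ⊆ sat(T)(i,j)` in every box. The fibre is
therefore a product over the boxes, and a box contributes
`∑_{T(i,j) ∈ s ⊆ sat(T)(i,j)} (q-1)^{|s|-1} = q^{|sat(T)(i,j)|-1}`. -/

namespace Finset

variable {ι R : Type*}

theorem pow_sum_sub_card [CommMonoid R] (y : R) (s : Finset ι) {f : ι → ℕ}
    (hf : ∀ i ∈ s, 1 ≤ f i) : y ^ (∑ i ∈ s, f i - #s) = ∏ i ∈ s, y ^ (f i - 1) := by
  rw [prod_pow_eq_pow_sum, sum_tsub_distrib s hf, card_eq_sum_ones]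

theorem sum_pow_card_powerset [CommSemiring R] (y : R) (s : Finset ι) :
    ∑ t ∈ s.powerset, y ^ #t = (y + 1) ^ #s := by
  simpa using sum_pow_mul_eq_add_pow y 1 s

theorem sum_pow_card_sub_one_powerset_filter_mem [CommSemiring R] [DecidableEq ι] (y : R)
    {s : Finset ι} {a : ι} (ha : a ∈ s) :
    ∑ t ∈ s.powerset with a ∈ t, y ^ (#t - 1) = (y + 1) ^ (#s - 1) := by
  have hnotMem : ∀ t ∈ (s.erase a).powerset, a ∉ t :=
    fun t ht hat => notMem_erase a s (mem_powerset.1 ht hat)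
  rw [sum_filter, ← insert_erase ha, sum_powerset_insert (notMem_erase a s),
    card_insert_of_notMem (notMem_erase a s), Nat.add_sub_cancel, ← sum_pow_card_powerset,
    sum_eq_zero fun t ht => if_neg (hnotMem t ht), zero_add]
  refine sum_congr rfl fun t ht => ?_
  rw [if_pos (mem_insert_self a t), card_insert_of_notMem (hnotMem t ht), Nat.add_sub_cancel]

end Finset

theorem Set.finsum_mem_eq_finsum_mem_fiberwise {α β M : Type*} [AddCommMonoid M] {s : Set α}
    {t : Set β} (hs : s.Finite) (ht : t.Finite) {g : α → β} (hg : Set.MapsTo g s t)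
    (f : α → M) : ∑ᶠ a ∈ s, f a = ∑ᶠ b ∈ t, ∑ᶠ a ∈ {a ∈ s | g a = b}, f a := by
  have hcover : s = ⋃ b ∈ t, {a ∈ s | g a = b} := by
    ext a
    simp only [Set.mem_iUnion, Set.mem_sep_iff, exists_prop]
    exact ⟨fun ha => ⟨g a, hg ha, ha, rfl⟩, fun ⟨_, _, ha, _⟩ => ha⟩
  have hdisj : t.PairwiseDisjoint fun b => {a ∈ s | g a = b} :=
    fun b _ b' _ hbb' => Set.disjoint_left.2 fun a ha ha' => hbb' (ha.2.symm.trans ha'.2)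
  conv_lhs => rw [hcover]
  exact finsum_mem_biUnion hdisj ht fun b _ => hs.subset (Set.sep_subset _ _)

namespace DriftKL

section BoxFunctions

variable {α β M R : Type*} (S : Finset (α × β)) (t : α × β → Finset M) (d : M)

def boxPi : Set (α → β → M) :=
  {g | (∀ p ∈ S, g p.1 p.2 ∈ t p) ∧ ∀ p ∉ S, g p.1 p.2 = d}

def boxExtend (g : ∀ p ∈ S, M) : α → β → M :=
  fun a c => if h : (a, c) ∈ S then g (a, c) h else d

theorem bijOn_boxExtend : Set.BijOn (boxExtend S d) ↑(S.pi t) (boxPi S t d) := by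
  refine ⟨fun g hg => ⟨fun p hp => ?_, fun p hp => ?_⟩, fun g _ g' _ hgg' => ?_, fun g hg => ?_⟩
  · simpa [boxExtend, hp] using Finset.mem_pi.1 hg p hp
  · simp [boxExtend, hp]
  · funext p hp
    simpa [boxExtend, hp] using congr_fun₂ hgg' p.1 p.2
  · refine ⟨fun p _ => g p.1 p.2, Finset.mem_pi.2 fun p hp => hg.1 p hp, ?_⟩
    funext a c
    by_cases h : (a, c) ∈ S
    · simp [boxExtend, h]
    · simp [boxExtend, h, hg.2 (a, c) h]

theorem boxPi_finite : (boxPi S t d).Finite := by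
  rw [← (bijOn_boxExtend S t d).image_eq]
  exact (S.pi t).finite_toSet.image _

theorem finsum_mem_boxPi_prod [CommSemiring R] (f : α × β → M → R) :
    ∑ᶠ g ∈ boxPi S t d, ∏ p ∈ S, f p (g p.1 p.2) = ∏ p ∈ S, ∑ m ∈ t p, f p m := by
  rw [Finset.prod_sum, ← finsum_mem_coe_finset]
  refine (finsum_mem_eq_of_bijOn _ (bijOn_boxExtend S t d) fun g _ => ?_).symm
  rw [← Finset.prod_attach S]
  refine Finset.prod_congr rfl fun p _ => ?_
  simp [boxExtend, p.2]

end BoxFunctions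

section Tableaux

variable {ℓ : ℕ} {lam b : ℕ → ℕ} {i j : ℕ}

theorem InShape.le_length (hlam : IsPartitionFun ℓ lam) (h : InShape lam i j) : i ≤ ℓ := by
  by_contra hi
  have := hlam.2.2 i (Or.inr (by omega))
  have := h.2
  omega

theorem InShape.left (h : InShape lam i j) (hj : 2 ≤ j) : InShape lam i (j - 1) :=
  ⟨h.1, by omega, by have := h.2.2; omega⟩

theorem InShape.down (hlam : IsPartitionFun ℓ lam) (h : InShape lam i j) (hi : 2 ≤ i) :
    InShape lam (i - 1) j := by
  have := hlam.2.1 (i - 1) i (by omega) (by omega) (h.le_length hlam)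
  exact ⟨by omega, h.2.1, by have := h.2.2; omega⟩

theorem mem_shapeBoxes (hlam : IsPartitionFun ℓ lam) {p : ℕ × ℕ} :
    p ∈ shapeBoxes ℓ lam ↔ InShape lam p.1 p.2 := by
  refine ⟨fun hp => ?_, fun h => ?_⟩
  · simp only [shapeBoxes, Finset.mem_filter, Finset.mem_product, Finset.mem_Icc] at hp
    exact ⟨hp.1.1.1, hp.1.2.1, hp.2⟩
  · have := hlam.2.1 1 p.1 le_rfl h.1 (h.le_length hlam)
    simp only [shapeBoxes, Finset.mem_filter, Finset.mem_product, Finset.mem_Icc]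
    exact ⟨⟨⟨h.1, h.le_length hlam⟩, h.2.1, by have := h.2.2; omega⟩, h.2.2⟩

theorem le_of_rowMono {T : ℕ → ℕ → ℕ}
    (hrow : ∀ i j, InShape lam i j → InShape lam i (j + 1) → T i j ≤ T i (j + 1))
    (h : InShape lam i j) (hj : 2 ≤ j) : T i (j - 1) ≤ T i j := by
  have := hrow i (j - 1) (h.left hj) (by rwa [Nat.sub_add_cancel (by omega)])
  rwa [Nat.sub_add_cancel (by omega)] at this

theorem lt_of_colMono (hlam : IsPartitionFun ℓ lam) {T : ℕ → ℕ → ℕ}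
    (hcol : ∀ i j, InShape lam i j → InShape lam (i + 1) j → T i j < T (i + 1) j)
    (h : InShape lam i j) (hi : 2 ≤ i) : T (i - 1) j < T i j := by
  have := hcol (i - 1) j (h.down hlam hi) (by rwa [Nat.sub_add_cancel (by omega)])
  rwa [Nat.sub_add_cancel (by omega)] at this

def satMin (T : ℕ → ℕ → ℕ) (i j : ℕ) : ℕ :=
  max (TxC T i (j - 1)) (TxC T (i - 1) j + 1)

theorem satF_of_inShape (T : ℕ → ℕ → ℕ) (h : InShape lam i j) :
    satF lam T i j = Finset.Icc (satMin T i j) (T i j) :=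
  if_pos h

theorem satMin_le_iff {T : ℕ → ℕ → ℕ} {x : ℕ} (hi : 1 ≤ i) (hj : 1 ≤ j) :
    satMin T i j ≤ x ↔ 1 ≤ x ∧ (2 ≤ j → T i (j - 1) ≤ x) ∧ (2 ≤ i → T (i - 1) j < x) := by
  simp only [satMin, TxC, max_le_iff]
  split_ifs <;> omega

theorem self_mem_satF (hlam : IsPartitionFun ℓ lam) {T : ℕ → ℕ → ℕ} (hT : T ∈ SSYTset lam b)
    (h : InShape lam i j) : T i j ∈ satF lam T i j := by
  obtain ⟨⟨hpos, hrow, hcol⟩, -, -⟩ := hT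
  rw [satF_of_inShape T h, Finset.mem_Icc, satMin_le_iff h.1 h.2.1]
  exact ⟨⟨hpos i j h, fun hj => le_of_rowMono hrow h hj, fun hi => lt_of_colMono hlam hcol h hi⟩,
    le_rfl⟩

def maxFill (U : ℕ → ℕ → Finset ℕ) (i j : ℕ) : ℕ := (U i j).sup id

theorem le_maxFill {U : ℕ → ℕ → Finset ℕ} {x : ℕ} (hx : x ∈ U i j) : x ≤ maxFill U i j :=
  Finset.le_sup (f := id) hx

theorem maxFill_mem {U : ℕ → ℕ → Finset ℕ} (hU : U ∈ SetSSYTset lam b) (h : InShape lam i j) :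
    maxFill U i j ∈ U i j := by
  simpa [maxFill] using Finset.sup_mem_of_nonempty (f := id) (hU.1 i j h)

theorem maxFill_mem_SSYTset {U : ℕ → ℕ → Finset ℕ} (hU : U ∈ SetSSYTset lam b) :
    maxFill U ∈ SSYTset lam b := by
  obtain ⟨hrow, hcol⟩ := hU.2.2.2 _ fun i j h => maxFill_mem hU h
  refine ⟨⟨fun i j h => (hU.2.2.1 i j h _ (maxFill_mem hU h)).1, hrow, hcol⟩,
    fun i j h => Finset.sup_le fun x hx => (hU.2.2.1 i j h x hx).2, fun i j h => ?_⟩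
  simp [maxFill, hU.2.1 i j h]

theorem subset_satF_maxFill (hlam : IsPartitionFun ℓ lam) {U : ℕ → ℕ → Finset ℕ}
    (hU : U ∈ SetSSYTset lam b) (h : InShape lam i j) :
    U i j ⊆ satF lam (maxFill U) i j := by
  intro x hx
  rw [satF_of_inShape _ h, Finset.mem_Icc, satMin_le_iff h.1 h.2.1]
  -- Trading the maximal entry of box `(i,j)` for `x` is still a choice of one entry per box.
  set C : ℕ → ℕ → ℕ := fun a c => if a = i ∧ c = j then x else maxFill U a c
  obtain ⟨hrow, hcol⟩ := hU.2.2.2 C fun a c hac => by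
    by_cases e : a = i ∧ c = j
    · obtain ⟨rfl, rfl⟩ := e
      simpa [C] using hx
    · simpa [C, e] using maxFill_mem hU hac
  refine ⟨⟨(hU.2.2.1 i j h x hx).1, fun hj => ?_, fun hi => ?_⟩, le_maxFill hx⟩
  · simpa [C, show j - 1 ≠ j by omega] using le_of_rowMono hrow h hj
  · simpa [C, show i - 1 ≠ i by omega] using lt_of_colMono hlam hcol h hi

theorem mem_SetSSYTset_of_subset_satF {T : ℕ → ℕ → ℕ} {U : ℕ → ℕ → Finset ℕ}
    (hT : T ∈ SSYTset lam b) (hsub : ∀ i j, InShape lam i j → U i j ⊆ satF lam T i j)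
    (hne : ∀ i j, InShape lam i j → (U i j).Nonempty)
    (hoff : ∀ i j, ¬ InShape lam i j → U i j = ∅) : U ∈ SetSSYTset lam b := by
  have hIcc : ∀ i j, InShape lam i j → ∀ x ∈ U i j, satMin T i j ≤ x ∧ x ≤ T i j :=
    fun i j h x hx => Finset.mem_Icc.1 (satF_of_inShape T h ▸ hsub i j h hx)
  refine ⟨hne, hoff, fun i j h x hx => ?_, fun C hC => ⟨fun i j h h' => ?_, fun i j h h' => ?_⟩⟩
  · have hmin := (satMin_le_iff h.1 h.2.1).1 (hIcc i j h x hx).1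
    exact ⟨hmin.1, (hIcc i j h x hx).2.trans (hT.2.1 i j h)⟩
  · have hmin := (satMin_le_iff h'.1 h'.2.1).1 (hIcc i (j + 1) h' _ (hC i (j + 1) h')).1
    simpa using (hIcc i j h _ (hC i j h)).2.trans (hmin.2.1 (by have := h.2.1; omega))
  · have hmin := (satMin_le_iff h'.1 h'.2.1).1 (hIcc (i + 1) j h' _ (hC (i + 1) j h')).1
    simpa using (hIcc i j h _ (hC i j h)).2.trans_lt (hmin.2.2 (by have := h.1; omega))

theorem maxFill_eq_of_subset_satF {T : ℕ → ℕ → ℕ} {U : ℕ → ℕ → Finset ℕ}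
    (hT : T ∈ SSYTset lam b) (hsub : ∀ i j, InShape lam i j → U i j ⊆ satF lam T i j)
    (hmem : ∀ i j, InShape lam i j → T i j ∈ U i j)
    (hoff : ∀ i j, ¬ InShape lam i j → U i j = ∅) : maxFill U = T := by
  funext i j
  by_cases h : InShape lam i j
  · refine le_antisymm (Finset.sup_le fun x hx => ?_) (le_maxFill (hmem i j h))
    exact (Finset.mem_Icc.1 (satF_of_inShape T h ▸ hsub i j h hx)).2
  · simp [maxFill, hoff i j h, hT.2.2 i j h]

def satChoices (lam : ℕ → ℕ) (T : ℕ → ℕ → ℕ) (p : ℕ × ℕ) : Finset (Finset ℕ) :=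
  {s ∈ (satF lam T p.1 p.2).powerset | T p.1 p.2 ∈ s}

theorem setOf_maxFill_eq (hlam : IsPartitionFun ℓ lam) {T : ℕ → ℕ → ℕ}
    (hT : T ∈ SSYTset lam b) :
    {U ∈ SetSSYTset lam b | maxFill U = T} = boxPi (shapeBoxes ℓ lam) (satChoices lam T) ∅ := by
  ext U
  simp only [boxPi, satChoices, Set.mem_ofPred_eq, Finset.mem_filter,
    Finset.mem_powerset, mem_shapeBoxes hlam]
  constructor
  · rintro ⟨hU, rfl⟩
    exact ⟨fun p hp => ⟨subset_satF_maxFill hlam hU hp, maxFill_mem hU hp⟩,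
      fun p hp => hU.2.1 _ _ hp⟩
  · rintro ⟨hin, hoff⟩
    have hsub i j (h : InShape lam i j) := (hin (i, j) h).1
    have hmem i j (h : InShape lam i j) := (hin (i, j) h).2
    have hoff' i j (h : ¬ InShape lam i j) := hoff (i, j) h
    exact ⟨mem_SetSSYTset_of_subset_satF hT hsub (fun i j h => ⟨_, hmem i j h⟩) hoff',
      maxFill_eq_of_subset_satF hT hsub hmem hoff'⟩

theorem finite_SSYTset (hlam : IsPartitionFun ℓ lam) : (SSYTset lam b).Finite :=
  (boxPi_finite (shapeBoxes ℓ lam) (fun p => Finset.Iic (b p.1)) 0).subset fun _ hT =>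
    ⟨fun _ hp => Finset.mem_Iic.2 (hT.2.1 _ _ ((mem_shapeBoxes hlam).1 hp)),
      fun _ hp => hT.2.2 _ _ (mt (mem_shapeBoxes hlam).2 hp)⟩

theorem finite_SetSSYTset (hlam : IsPartitionFun ℓ lam) : (SetSSYTset lam b).Finite :=
  (boxPi_finite (shapeBoxes ℓ lam) (fun p => (Finset.Icc 1 (b p.1)).powerset) ∅).subset
    fun _ hU => ⟨fun _ hp => Finset.mem_powerset.2 fun x hx =>
        Finset.mem_Icc.2 (hU.2.2.1 _ _ ((mem_shapeBoxes hlam).1 hp) x hx),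
      fun _ hp => hU.2.1 _ _ (mt (mem_shapeBoxes hlam).2 hp)⟩

open Polynomial in
theorem finsum_fiber_maxFill (hlam : IsPartitionFun ℓ lam) {T : ℕ → ℕ → ℕ}
    (hT : T ∈ SSYTset lam b) :
    ∑ᶠ U ∈ {U ∈ SetSSYTset lam b | maxFill U = T}, ((X : ℤ[X]) - 1) ^ exU ℓ lam U
      = X ^ depthT ℓ lam T := by
  have hTmem p (hp : p ∈ shapeBoxes ℓ lam) : T p.1 p.2 ∈ satF lam T p.1 p.2 :=
    self_mem_satF hlam hT ((mem_shapeBoxes hlam).1 hp)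
  rw [setOf_maxFill_eq hlam hT, depthT,
    Finset.pow_sum_sub_card _ _ fun p hp => Finset.card_pos.2 ⟨_, hTmem p hp⟩]
  calc _ = ∑ᶠ U ∈ boxPi (shapeBoxes ℓ lam) (satChoices lam T) ∅,
        ∏ p ∈ shapeBoxes ℓ lam, ((X : ℤ[X]) - 1) ^ ((U p.1 p.2).card - 1) :=
        finsum_mem_congr rfl fun U hU => Finset.pow_sum_sub_card _ _ fun p hp =>
          Finset.card_pos.2 ⟨_, (Finset.mem_filter.1 (hU.1 p hp)).2⟩
    _ = ∏ p ∈ shapeBoxes ℓ lam, ∑ s ∈ satChoices lam T p, ((X : ℤ[X]) - 1) ^ (s.card - 1) :=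
        finsum_mem_boxPi_prod _ _ _ fun _ (s : Finset ℕ) => ((X : ℤ[X]) - 1) ^ (s.card - 1)
    _ = _ := Finset.prod_congr rfl fun p hp => by
        rw [satChoices, Finset.sum_pow_card_sub_one_powerset_filter_mem _ (hTmem p hp),
          sub_add_cancel]

end Tableaux

theorem statement0_general (ℓ : ℕ) (lam b : ℕ → ℕ)
    (hlam : IsPartitionFun ℓ lam) :
    ∑ᶠ U ∈ SetSSYTset lam b, ((Polynomial.X : Polynomial ℤ) - 1) ^ exU ℓ lam U
      = ∑ᶠ T ∈ SSYTset lam b, (Polynomial.X : Polynomial ℤ) ^ depthT ℓ lam T := by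
  rw [Set.finsum_mem_eq_finsum_mem_fiberwise (finite_SetSSYTset hlam) (finite_SSYTset hlam)
    fun _ hU => maxFill_mem_SSYTset hU]
  exact finsum_mem_congr rfl fun _ hT => finsum_fiber_maxFill hlam hT

/-- For a partition `λ` and a flag `b` of positive integers,
`∑_{U ∈ SetSSYT(λ,b)} (q-1)^{ex(U)} = ∑_{T ∈ SSYT(λ,b)} q^{depth(T)}` in `ℤ[q]`. -/
theorem statement0 (ℓ : ℕ) (lam b : ℕ → ℕ)
    (hlam : IsPartitionFun ℓ lam)
    (hb : ∀ i, 1 ≤ i → i ≤ ℓ → 1 ≤ b i) :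
    ∑ᶠ U ∈ SetSSYTset lam b, ((Polynomial.X : Polynomial ℤ) - 1) ^ exU ℓ lam U
      = ∑ᶠ T ∈ SSYTset lam b, (Polynomial.X : Polynomial ℤ) ^ depthT ℓ lam T :=
  statement0_general ℓ lam b hlam

end DriftKL
end
end

section
/- Let λ=(λ₁≥⋯≥λ_ℓ>0) be a partition and b=(b₁,…,b_ℓ) a vector of positive integers. The saturation map sat : SSYT(λ,b) → Lower(λ,b) and the restriction of sup to Lower(λ,b), sup : Lower(λ,b) → SSYT(λ,b), are well-defined and are mutually inverse bijections. -/
open scoped Classical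

noncomputable section

namespace DriftKL

/-- `sup(U)(i,j) = max U(i,j)` (as a function vanishing off the shape). -/
def supF (lam : ℕ → ℕ) (U : ℕ → ℕ → Finset ℕ) (i j : ℕ) : ℕ :=
  if InShape lam i j then (U i j).sup id else 0

/-- Boundary convention for set-valued fillings: `max U(i,0) = 1` for `i > 0`
and `max U(0,j) = 0`. -/
def UxC (U : ℕ → ℕ → Finset ℕ) (i j : ℕ) : ℕ :=
  if i = 0 then 0 else if j = 0 then 1 else (U i j).sup id

/-- The lower saturated set-valued fillings: each `U(i,j)` is the full interval
`[max{max U(i,j-1), 1 + max U(i-1,j)}, max U(i,j)]`. -/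
def LowerSet (lam b : ℕ → ℕ) : Set (ℕ → ℕ → Finset ℕ) :=
  {U | U ∈ SetSSYTset lam b ∧ ∀ i j, InShape lam i j →
      U i j = Finset.Icc (max (UxC U i (j - 1)) (UxC U (i - 1) j + 1)) ((U i j).sup id)}


lemma mem_sup_id (s : Finset ℕ) (h : s.Nonempty) : s.sup id ∈ s := by
  obtain ⟨m, hm, hmax⟩ := s.exists_max_image id h
  have h1 : s.sup id ≤ m := Finset.sup_le hmax
  have h2 : m ≤ s.sup id := Finset.le_sup (f := id) hm
  rwa [le_antisymm h1 h2]

lemma sup_Icc (a b : ℕ) (h : a ≤ b) : (Finset.Icc a b).sup id = b := by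
  apply le_antisymm
  · exact Finset.sup_le (fun x hx => (Finset.mem_Icc.1 hx).2)
  · exact Finset.le_sup (f := id) (Finset.mem_Icc.2 ⟨h, le_rfl⟩)

lemma shape_le_ell {ℓ : ℕ} {lam : ℕ → ℕ} (hlam : IsPartitionFun ℓ lam)
    {i j : ℕ} (h : InShape lam i j) : i ≤ ℓ := by
  by_contra hc
  have := hlam.2.2 i (Or.inr (Nat.lt_of_not_le hc))
  have := h.2.2
  have := h.2.1
  omega

lemma shape_left {lam : ℕ → ℕ} {i j : ℕ} (h : InShape lam i j) (hj : 2 ≤ j) :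
    InShape lam i (j - 1) :=
  ⟨h.1, by omega, le_trans (Nat.sub_le j 1) h.2.2⟩

lemma shape_below {ℓ : ℕ} {lam : ℕ → ℕ} (hlam : IsPartitionFun ℓ lam)
    {i j : ℕ} (h : InShape lam i j) (hi : 2 ≤ i) : InShape lam (i - 1) j := by
  refine ⟨by omega, h.2.1, le_trans h.2.2 ?_⟩
  exact hlam.2.1 (i - 1) i (by omega) (by omega) (shape_le_ell hlam h)

/-- The lower bound of the saturation interval is at most `T i j`. -/
lemma lb_le {ℓ : ℕ} {lam b : ℕ → ℕ} (hlam : IsPartitionFun ℓ lam)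
    {T : ℕ → ℕ → ℕ} (hT : T ∈ SSYTset lam b) {i j : ℕ} (h : InShape lam i j) :
    max (TxC T i (j - 1)) (TxC T (i - 1) j + 1) ≤ T i j := by
  obtain ⟨⟨hpos, hrow, hcol⟩, hflag, hoff⟩ := hT
  have hi1 : i ≠ 0 := by have := h.1; omega
  refine max_le ?_ ?_
  · by_cases hj : j - 1 = 0
    · rw [TxC, if_neg hi1, if_pos hj]; exact hpos i j h
    · rw [TxC, if_neg hi1, if_neg hj]
      have h2 : 2 ≤ j := by omega
      have hsh2 : InShape lam i ((j - 1) + 1) := by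
        rw [Nat.sub_add_cancel (by omega : 1 ≤ j)]; exact h
      have := hrow i (j - 1) (shape_left h h2) hsh2
      rwa [Nat.sub_add_cancel (by omega : 1 ≤ j)] at this
  · by_cases hi : i - 1 = 0
    · rw [TxC, if_pos hi]; exact hpos i j h
    · rw [TxC, if_neg hi, if_neg (by have := h.2.1; omega : j ≠ 0)]
      have h2 : 2 ≤ i := by omega
      have hsh2 : InShape lam ((i - 1) + 1) j := by
        rw [Nat.sub_add_cancel (by omega : 1 ≤ i)]; exact h
      have := hcol (i - 1) j (shape_below hlam h h2) hsh2
      rw [Nat.sub_add_cancel (by omega : 1 ≤ i)] at this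
      omega

/-- `sup ∘ sat = id` pointwise on the shape. -/
lemma sup_satF {ℓ : ℕ} {lam b : ℕ → ℕ} (hlam : IsPartitionFun ℓ lam)
    {T : ℕ → ℕ → ℕ} (hT : T ∈ SSYTset lam b) (i j : ℕ) :
    (satF lam T i j).sup id = T i j := by
  by_cases h : InShape lam i j
  · rw [satF, if_pos h, sup_Icc _ _ (lb_le hlam hT h)]
  · rw [satF, if_neg h, Finset.sup_empty]
    exact (hT.2.2 i j h).symm

lemma UxC_satF {ℓ : ℕ} {lam b : ℕ → ℕ} (hlam : IsPartitionFun ℓ lam)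
    {T : ℕ → ℕ → ℕ} (hT : T ∈ SSYTset lam b) (i j : ℕ) :
    UxC (satF lam T) i j = TxC T i j := by
  by_cases hi : i = 0
  · rw [UxC, if_pos hi, TxC, if_pos hi]
  by_cases hj : j = 0
  · rw [UxC, if_neg hi, if_pos hj, TxC, if_neg hi, if_pos hj]
  · rw [UxC, if_neg hi, if_neg hj, TxC, if_neg hi, if_neg hj]
    exact sup_satF hlam hT i j

lemma TxC_supF {lam b : ℕ → ℕ} {U : ℕ → ℕ → Finset ℕ} (hU : U ∈ SetSSYTset lam b)
    (i j : ℕ) : TxC (supF lam U) i j = UxC U i j := by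
  by_cases hi : i = 0
  · rw [TxC, if_pos hi, UxC, if_pos hi]
  by_cases hj : j = 0
  · rw [TxC, if_neg hi, if_pos hj, UxC, if_neg hi, if_pos hj]
  · rw [TxC, if_neg hi, if_neg hj, UxC, if_neg hi, if_neg hj]
    by_cases h : InShape lam i j
    · rw [supF, if_pos h]
    · rw [supF, if_neg h, hU.2.1 i j h, Finset.sup_empty]
      rfl

/-- `sat : SSYT(λ,b) → Lower(λ,b)` and
`sup : Lower(λ,b) → SSYT(λ,b)` are well-defined, mutually inverse bijections. -/
theorem statement3 (ℓ : ℕ) (lam b : ℕ → ℕ)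
    (hlam : IsPartitionFun ℓ lam)
    (hb : ∀ i, 1 ≤ i → i ≤ ℓ → 1 ≤ b i) :
    (∀ T ∈ SSYTset lam b, satF lam T ∈ LowerSet lam b) ∧
    (∀ U ∈ LowerSet lam b, supF lam U ∈ SSYTset lam b) ∧
    (∀ T ∈ SSYTset lam b, supF lam (satF lam T) = T) ∧
    (∀ U ∈ LowerSet lam b, satF lam (supF lam U) = U) := by
  constructor
  · -- sat is well defined into LowerSet
    intro T hT
    have hlb := fun {i j} h => lb_le hlam hT (i := i) (j := j) h
    have hmemsat : ∀ i j, InShape lam i j → ∀ x ∈ satF lam T i j,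
        max (TxC T i (j - 1)) (TxC T (i - 1) j + 1) ≤ x ∧ x ≤ T i j := by
      intro i j h x hx
      rw [satF, if_pos h] at hx
      exact Finset.mem_Icc.1 hx
    refine ⟨⟨?_, ?_, ?_, ?_⟩, ?_⟩
    · intro i j h
      rw [satF, if_pos h]
      exact Finset.nonempty_Icc.2 (hlb h)
    · intro i j h
      rw [satF, if_neg h]
    · intro i j h x hx
      obtain ⟨h1, h2⟩ := hmemsat i j h x hx
      refine ⟨by omega, le_trans h2 (hT.2.1 i j h)⟩
    · intro T' hT'
      constructor
      · intro i j h h'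
        obtain ⟨_, h2⟩ := hmemsat i j h (T' i j) (hT' i j h)
        obtain ⟨h1', _⟩ := hmemsat i (j+1) h' (T' i (j+1)) (hT' i (j+1) h')
        have hlo : TxC T i ((j+1) - 1) ≤ T' i (j+1) := le_trans (le_max_left _ _) h1'
        rw [(by omega : j + 1 - 1 = j), TxC, if_neg (by have := h.1; omega),
          if_neg (by have := h.2.1; omega)] at hlo
        omega
      · intro i j h h'
        obtain ⟨_, h2⟩ := hmemsat i j h (T' i j) (hT' i j h)
        obtain ⟨h1', _⟩ := hmemsat (i+1) j h' (T' (i+1) j) (hT' (i+1) j h')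
        have hlo : TxC T ((i+1) - 1) j + 1 ≤ T' (i+1) j := le_trans (le_max_right _ _) h1'
        rw [(by omega : i + 1 - 1 = i), TxC, if_neg (by have := h.1; omega),
          if_neg (by have := h.2.1; omega)] at hlo
        omega
    · intro i j h
      rw [UxC_satF hlam hT, UxC_satF hlam hT, sup_satF hlam hT, satF, if_pos h]
  refine ⟨?_, ?_, ?_⟩
  · -- sup is well defined into SSYTset
    intro U hU
    obtain ⟨⟨hne, hoff, hbd, hch⟩, _⟩ := hU
    have hmem : ∀ i j, InShape lam i j → supF lam U i j ∈ U i j := by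
      intro i j h
      rw [supF, if_pos h]
      exact mem_sup_id _ (hne i j h)
    obtain ⟨hrow, hcol⟩ := hch (supF lam U) hmem
    refine ⟨⟨?_, hrow, hcol⟩, ?_, ?_⟩
    · intro i j h
      exact (hbd i j h _ (hmem i j h)).1
    · intro i j h
      exact (hbd i j h _ (hmem i j h)).2
    · intro i j h
      rw [supF, if_neg h]
  · -- sup ∘ sat = id
    intro T hT
    funext i j
    by_cases h : InShape lam i j
    · rw [supF, if_pos h]
      exact sup_satF hlam hT i j
    · rw [supF, if_neg h, (hT.2.2 i j h)]
  · -- sat ∘ sup = id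
    intro U hU
    obtain ⟨hU1, hlow⟩ := hU
    funext i j
    by_cases h : InShape lam i j
    · rw [satF, if_pos h, TxC_supF hU1, TxC_supF hU1, supF, if_pos h]
      exact (hlow i j h).symm
    · rw [satF, if_neg h, (hU1.2.1 i j h)]


end DriftKL
end
end

section
/- Let λ=(λ₁≥⋯≥λ_ℓ>0) be a partition, b=(b₁,…,b_ℓ) a vector of positive integers, and T∈SSYT(λ,b). Then the fiber {U∈SetSSYT(λ,b) : sup(U)=T} consists exactly of the set-valued fillings U with T(i,j) ∈ U(i,j) ⊆ sat(T)(i,j) for every box (i,j) of λ; in particular this fiber has exactly 2^{depth(T)} elements. -/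
open scoped Classical

noncomputable section

namespace DriftKL

/-!
Given `sup U = T`, semistandardness of `U` only compares the entries of a box with the maxima of
its left and lower neighbours, which are `T(i,j-1)` and `T(i-1,j)`; so it says exactly that every
entry of `U(i,j)` lies in `sat(T)(i,j)`. The fiber is thus the product over the boxes of the
intervals `[{T(i,j)}, sat(T)(i,j)]` in the lattice of finsets, of sizes `2 ^ (|sat(T)(i,j)| - 1)`.
-/

theorem _root_.Finset.sup_id_mem {α : Type*} [LinearOrder α] [OrderBot α] {s : Finset α}
    (hs : s.Nonempty) : s.sup id ∈ s := by
  simpa using Finset.sup_mem_of_nonempty (f := id) hs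

theorem _root_.Finset.ncard_setOf_forall_mem_Icc {α β : Type*} (B : Finset α) (s t : α → Finset β)
    (hst : ∀ p ∈ B, s p ⊆ t p) :
    {U : α → Finset β | (∀ p ∈ B, s p ⊆ U p ∧ U p ⊆ t p) ∧ ∀ p ∉ B, U p = ∅}.ncard =
      ∏ p ∈ B, 2 ^ ((t p).card - (s p).card) := by
  set extend : (∀ p ∈ B, Finset β) → α → Finset β := fun f p => if h : p ∈ B then f p h else ∅
  have hinj : Function.Injective extend := by
    intro f g hfg
    funext p hp
    simpa [extend, hp] using congrFun hfg p
  have himage : {U : α → Finset β | (∀ p ∈ B, s p ⊆ U p ∧ U p ⊆ t p) ∧ ∀ p ∉ B, U p = ∅} =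
      extend '' ↑(B.pi fun p => Finset.Icc (s p) (t p)) := by
    ext U
    constructor
    · rintro ⟨hU, hoff⟩
      refine ⟨fun p _ => U p, Finset.mem_pi.2 fun p hp => Finset.mem_Icc.2 (hU p hp), ?_⟩
      funext p
      by_cases hp : p ∈ B <;> simp [extend, hp, hoff]
    · rintro ⟨f, hf, rfl⟩
      rw [Finset.mem_coe, Finset.mem_pi] at hf
      exact ⟨fun p hp => by simpa [extend, hp] using hf p hp, fun p hp => dif_neg hp⟩
  rw [himage, Set.ncard_image_of_injective _ hinj, Set.ncard_coe_finset, Finset.card_pi]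
  exact Finset.prod_congr rfl fun p hp => Finset.card_Icc_finset (hst p hp)

namespace InShape

variable {ℓ : ℕ} {lam : ℕ → ℕ} {i j : ℕ}

theorem le_length_s4 (hlam : IsPartitionFun ℓ lam) (h : InShape lam i j) : i ≤ ℓ := by
  by_contra hi
  have := hlam.2.2 i (Or.inr (not_le.mp hi))
  have := h.2.1
  have := h.2.2
  omega

theorem left_s4 (h : InShape lam i j) (hj : 2 ≤ j) : InShape lam i (j - 1) :=
  ⟨h.1, by omega, by have := h.2.2; omega⟩

theorem down_s4 (hlam : IsPartitionFun ℓ lam) (h : InShape lam i j) (hi : 2 ≤ i) :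
    InShape lam (i - 1) j :=
  ⟨by omega, h.2.1, h.2.2.trans (hlam.2.1 _ _ (by omega) (by omega) (h.le_length_s4 hlam))⟩

end InShape

theorem mem_shapeBoxes_iff {ℓ : ℕ} {lam : ℕ → ℕ} (hlam : IsPartitionFun ℓ lam) {p : ℕ × ℕ} :
    p ∈ shapeBoxes ℓ lam ↔ InShape lam p.1 p.2 := by
  simp only [shapeBoxes, Finset.mem_filter, Finset.mem_product, Finset.mem_Icc]
  constructor
  · rintro ⟨⟨⟨hi, -⟩, hj, -⟩, hle⟩
    exact ⟨hi, hj, hle⟩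
  · intro h
    have hmono : lam p.1 ≤ lam 1 := hlam.2.1 1 p.1 le_rfl h.1 (h.le_length_s4 hlam)
    exact ⟨⟨⟨h.1, h.le_length_s4 hlam⟩, h.2.1, h.2.2.trans hmono⟩, h.2.2⟩

section Saturation

variable {lam b : ℕ → ℕ} {T : ℕ → ℕ → ℕ} {i j x : ℕ}

theorem max_txC_le (hj : j ≠ 0) (hx : 1 ≤ x) (hrow : 2 ≤ j → T i (j - 1) ≤ x)
    (hcol : 2 ≤ i → T (i - 1) j < x) :
    max (TxC T i (j - 1)) (TxC T (i - 1) j + 1) ≤ x := by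
  refine max_le ?_ ?_ <;> unfold TxC
  · split_ifs with hi hj'
    exacts [Nat.zero_le x, hx, hrow (by omega)]
  · split_ifs with hi
    · exact hx
    · exact hcol (by omega)

theorem mem_satF_iff :
    x ∈ satF lam T i j ↔
      InShape lam i j ∧ max (TxC T i (j - 1)) (TxC T (i - 1) j + 1) ≤ x ∧ x ≤ T i j := by
  unfold satF
  split_ifs with h <;> simp [h]

theorem one_le_of_mem_satF (hx : x ∈ satF lam T i j) : 1 ≤ x := by
  have := (mem_satF_iff.1 hx).2.1
  omega

theorem le_of_mem_satF (hx : x ∈ satF lam T i j) : x ≤ T i j :=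
  (mem_satF_iff.1 hx).2.2

theorem le_of_mem_satF_succ_right (h : InShape lam i j) (hx : x ∈ satF lam T i (j + 1)) :
    T i j ≤ x := by
  have hlow := (le_max_left _ _).trans (mem_satF_iff.1 hx).2.1
  rwa [Nat.add_sub_cancel, TxC, if_neg (by have := h.1; omega),
    if_neg (by have := h.2.1; omega)] at hlow

theorem lt_of_mem_satF_succ_up (h : InShape lam i j) (hx : x ∈ satF lam T (i + 1) j) :
    T i j < x := by
  have hlow := (le_max_right _ _).trans (mem_satF_iff.1 hx).2.1
  rwa [Nat.add_sub_cancel, TxC, if_neg (by have := h.1; omega),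
    if_neg (by have := h.2.1; omega), Nat.add_one_le_iff] at hlow

theorem mem_satF_self {ℓ : ℕ} (hlam : IsPartitionFun ℓ lam) (hT : T ∈ SSYTset lam b)
    (h : InShape lam i j) : T i j ∈ satF lam T i j := by
  obtain ⟨⟨hpos, hrow, hcol⟩, -, -⟩ := hT
  refine mem_satF_iff.2 ⟨h, max_txC_le (by have := h.2.1; omega) (hpos i j h) ?_ ?_, le_rfl⟩
  · intro hj
    have := hrow i (j - 1) (h.left_s4 hj) (by rwa [Nat.sub_add_cancel (by omega)])
    rwa [Nat.sub_add_cancel (by omega)] at this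
  · intro hi
    have := hcol (i - 1) j (h.down_s4 hlam hi) (by rwa [Nat.sub_add_cancel (by omega)])
    rwa [Nat.sub_add_cancel (by omega)] at this

end Saturation

section SetValued

variable {lam b : ℕ → ℕ} {U : ℕ → ℕ → Finset ℕ} {i j x y : ℕ}

theorem exists_selection_of_mem (hne : ∀ i j, InShape lam i j → (U i j).Nonempty)
    {p q : ℕ × ℕ} (hpq : p ≠ q) (hx : x ∈ U p.1 p.2) (hy : y ∈ U q.1 q.2) :
    ∃ S : ℕ → ℕ → ℕ, (∀ i j, InShape lam i j → S i j ∈ U i j) ∧ S p.1 p.2 = x ∧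
      S q.1 q.2 = y := by
  refine ⟨fun i j => if (i, j) = p then x else if (i, j) = q then y else (U i j).sup id,
    fun i j h => ?_, by simp, by simp [hpq.symm]⟩
  dsimp only
  split_ifs with hp hq
  · subst hp
    exact hx
  · subst hq
    exact hy
  · exact Finset.sup_id_mem (hne i j h)

theorem le_of_mem_of_mem_succ_right (hU : U ∈ SetSSYTset lam b) (h : InShape lam i j)
    (h' : InShape lam i (j + 1)) (hx : x ∈ U i j) (hy : y ∈ U i (j + 1)) : x ≤ y := by
  obtain ⟨S, hS, rfl, rfl⟩ :=
    exists_selection_of_mem hU.1 (p := (i, j)) (q := (i, j + 1)) (by simp) hx hy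
  exact (hU.2.2.2 S hS).1 i j h h'

theorem lt_of_mem_of_mem_succ_up (hU : U ∈ SetSSYTset lam b) (h : InShape lam i j)
    (h' : InShape lam (i + 1) j) (hx : x ∈ U i j) (hy : y ∈ U (i + 1) j) : x < y := by
  obtain ⟨S, hS, rfl, rfl⟩ :=
    exists_selection_of_mem hU.1 (p := (i, j)) (q := (i + 1, j)) (by simp) hx hy
  exact (hU.2.2.2 S hS).2 i j h h'

theorem supF_mem (h : InShape lam i j) (hne : (U i j).Nonempty) : supF lam U i j ∈ U i j := by
  rw [supF, if_pos h]
  exact Finset.sup_id_mem hne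

theorem le_supF (h : InShape lam i j) (hx : x ∈ U i j) : x ≤ supF lam U i j := by
  rw [supF, if_pos h]
  exact Finset.le_sup (f := id) hx

variable {T : ℕ → ℕ → ℕ}

theorem subset_satF_of_supF_eq {ℓ : ℕ} (hlam : IsPartitionFun ℓ lam) (hU : U ∈ SetSSYTset lam b)
    (hsup : supF lam U = T) (h : InShape lam i j) : U i j ⊆ satF lam T i j := by
  have hmem : ∀ {i j}, InShape lam i j → T i j ∈ U i j := fun h => hsup ▸ supF_mem h (hU.1 _ _ h)
  intro x hx
  refine mem_satF_iff.2 ⟨h, max_txC_le (by have := h.2.1; omega) (hU.2.2.1 i j h x hx).1 ?_ ?_,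
    hsup ▸ le_supF h hx⟩
  · intro hj
    obtain ⟨k, rfl⟩ : ∃ k, j = k + 1 := ⟨j - 1, by omega⟩
    have hk : InShape lam i k := h.left_s4 hj
    simpa using le_of_mem_of_mem_succ_right hU hk h (hmem hk) hx
  · intro hi
    obtain ⟨k, rfl⟩ : ∃ k, i = k + 1 := ⟨i - 1, by omega⟩
    have hk : InShape lam k j := h.down_s4 hlam hi
    simpa using lt_of_mem_of_mem_succ_up hU hk h (hmem hk) hx

theorem supF_eq_of_subset_satF (hT : T ∈ SSYTset lam b)
    (hU : ∀ i j, InShape lam i j → T i j ∈ U i j ∧ U i j ⊆ satF lam T i j) : supF lam U = T := by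
  funext i j
  by_cases h : InShape lam i j
  · refine le_antisymm ?_ (le_supF h (hU i j h).1)
    rw [supF, if_pos h]
    exact Finset.sup_le fun x hx => le_of_mem_satF ((hU i j h).2 hx)
  · rw [supF, if_neg h, hT.2.2 i j h]

theorem mem_setSSYTset_of_subset_satF (hT : T ∈ SSYTset lam b)
    (hU : ∀ i j, InShape lam i j → T i j ∈ U i j ∧ U i j ⊆ satF lam T i j)
    (hoff : ∀ i j, ¬ InShape lam i j → U i j = ∅) : U ∈ SetSSYTset lam b := by
  have hsat : ∀ {i j x}, InShape lam i j → x ∈ U i j → x ∈ satF lam T i j :=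
    fun h hx => (hU _ _ h).2 hx
  refine ⟨fun i j h => ⟨T i j, (hU i j h).1⟩, hoff, fun i j h x hx => ?_, fun S hS => ?_⟩
  · exact ⟨one_le_of_mem_satF (hsat h hx), (le_of_mem_satF (hsat h hx)).trans (hT.2.1 i j h)⟩
  · refine ⟨fun i j h h' => ?_, fun i j h h' => ?_⟩
    · exact (le_of_mem_satF (hsat h (hS i j h))).trans
        (le_of_mem_satF_succ_right h (hsat h' (hS _ _ h')))
    · exact (le_of_mem_satF (hsat h (hS i j h))).trans_lt
        (lt_of_mem_satF_succ_up h (hsat h' (hS _ _ h')))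

end SetValued

section Fiber

variable {ℓ : ℕ} {lam b : ℕ → ℕ} {T : ℕ → ℕ → ℕ}

theorem setOf_supF_eq (hlam : IsPartitionFun ℓ lam) (hT : T ∈ SSYTset lam b) :
    {U | U ∈ SetSSYTset lam b ∧ supF lam U = T} =
      {U : ℕ → ℕ → Finset ℕ |
        (∀ i j, InShape lam i j → T i j ∈ U i j ∧ U i j ⊆ satF lam T i j) ∧
        (∀ i j, ¬ InShape lam i j → U i j = ∅)} := by
  ext U
  constructor
  · rintro ⟨hU, hsup⟩
    exact ⟨fun i j h => ⟨hsup ▸ supF_mem h (hU.1 i j h), subset_satF_of_supF_eq hlam hU hsup h⟩,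
      hU.2.1⟩
  · rintro ⟨hU, hoff⟩
    exact ⟨mem_setSSYTset_of_subset_satF hT hU hoff, supF_eq_of_subset_satF hT hU⟩

theorem ncard_setOf_mem_subset_satF (hlam : IsPartitionFun ℓ lam) (hT : T ∈ SSYTset lam b) :
    {U : ℕ → ℕ → Finset ℕ |
        (∀ i j, InShape lam i j → T i j ∈ U i j ∧ U i j ⊆ satF lam T i j) ∧
        (∀ i j, ¬ InShape lam i j → U i j = ∅)}.ncard =
      ∏ p ∈ shapeBoxes ℓ lam, 2 ^ ((satF lam T p.1 p.2).card - 1) := by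
  have hpre : {U : ℕ → ℕ → Finset ℕ |
        (∀ i j, InShape lam i j → T i j ∈ U i j ∧ U i j ⊆ satF lam T i j) ∧
        (∀ i j, ¬ InShape lam i j → U i j = ∅)} =
      Function.uncurry ⁻¹' {V | (∀ p ∈ shapeBoxes ℓ lam,
        {T p.1 p.2} ⊆ V p ∧ V p ⊆ satF lam T p.1 p.2) ∧ ∀ p ∉ shapeBoxes ℓ lam, V p = ∅} := by
    ext U
    simp [mem_shapeBoxes_iff hlam]
  rw [hpre, Set.ncard_preimage_of_injective_subset_range Function.uncurry_injective
    fun V _ => ⟨Function.curry V, Function.uncurry_curry V⟩, Finset.ncard_setOf_forall_mem_Icc]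
  · simp
  · intro p hp
    simpa using mem_satF_self hlam hT ((mem_shapeBoxes_iff hlam).1 hp)

theorem depthT_eq_sum (hlam : IsPartitionFun ℓ lam) (hT : T ∈ SSYTset lam b) :
    depthT ℓ lam T = ∑ p ∈ shapeBoxes ℓ lam, ((satF lam T p.1 p.2).card - 1) := by
  rw [depthT, Finset.card_eq_sum_ones, Finset.sum_tsub_distrib]
  intro p hp
  exact Finset.card_pos.2 ⟨_, mem_satF_self hlam hT ((mem_shapeBoxes_iff hlam).1 hp)⟩

end Fiber

theorem statement4_general (ℓ : ℕ) (lam b : ℕ → ℕ)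
    (hlam : IsPartitionFun ℓ lam)
    (T : ℕ → ℕ → ℕ) (hT : T ∈ SSYTset lam b) :
    {U | U ∈ SetSSYTset lam b ∧ supF lam U = T} =
      {U : ℕ → ℕ → Finset ℕ |
        (∀ i j, InShape lam i j → T i j ∈ U i j ∧ U i j ⊆ satF lam T i j) ∧
        (∀ i j, ¬ InShape lam i j → U i j = ∅)} ∧
    ({U | U ∈ SetSSYTset lam b ∧ supF lam U = T}).ncard = 2 ^ depthT ℓ lam T := by
  rw [setOf_supF_eq hlam hT]
  refine ⟨rfl, ?_⟩
  rw [ncard_setOf_mem_subset_satF hlam hT, depthT_eq_sum hlam hT, Finset.prod_pow_eq_pow_sum]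

/-- For `T ∈ SSYT(λ,b)`, the fiber of `sup` over `T` consists
exactly of those set-valued fillings `U` with `T(i,j) ∈ U(i,j) ⊆ sat(T)(i,j)` at
every box, and it has exactly `2^{depth(T)}` elements. -/
theorem statement4 (ℓ : ℕ) (lam b : ℕ → ℕ)
    (hlam : IsPartitionFun ℓ lam)
    (hb : ∀ i, 1 ≤ i → i ≤ ℓ → 1 ≤ b i)
    (T : ℕ → ℕ → ℕ) (hT : T ∈ SSYTset lam b) :
    {U | U ∈ SetSSYTset lam b ∧ supF lam U = T} =
      {U : ℕ → ℕ → Finset ℕ |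
        (∀ i j, InShape lam i j → T i j ∈ U i j ∧ U i j ⊆ satF lam T i j) ∧
        (∀ i j, ¬ InShape lam i j → U i j = ∅)} ∧
    ({U | U ∈ SetSSYTset lam b ∧ supF lam U = T}).ncard = 2 ^ depthT ℓ lam T :=
  statement4_general ℓ lam b hlam T hT

end DriftKL
end
end

section
/- Let w∈S_n be covexillary and let v'≤v≤w in Bruhat order. Then (i) r^{v'}_e ≤ r^v_e for every box e; (ii) B(v,w) ⊆ B(v',w); and (iii) with λ=λ(w)=(λ₁≥⋯≥λ_ℓ>0), the flags b_i = max{m≥1 : B(v,w)_m ≥ λ_i+m−i} and b'_i = max{m≥1 : B(v',w)_m ≥ λ_i+m−i} satisfy b_i ≤ b'_i for every 1≤i≤ℓ (here B_m denotes the number of boxes in row m of the Young diagram B). -/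
open scoped Classical

noncomputable section

namespace DriftKL

/-- `w : ℕ → ℕ` restricts to a permutation of `{1, …, n}`. -/
def IsPermOn (n : ℕ) (w : ℕ → ℕ) : Prop :=
  (∀ i, 1 ≤ i → i ≤ n → 1 ≤ w i ∧ w i ≤ n) ∧
  (∀ i j, 1 ≤ i → i ≤ n → 1 ≤ j → j ≤ n → w i = w j → i = j) ∧
  (∀ k, 1 ≤ k → k ≤ n → ∃ i, 1 ≤ i ∧ i ≤ n ∧ w i = k)

/-- Coxeter length = number of inversions. -/
def invLen (n : ℕ) (u : ℕ → ℕ) : ℕ :=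
  (((Finset.Icc 1 n) ×ˢ (Finset.Icc 1 n)).filter
    (fun p => p.1 < p.2 ∧ u p.2 < u p.1)).card

/-- Covering step for Bruhat order: right multiplication by a transposition
raising the length by exactly one. -/
def BruhatCovers (n : ℕ) (u u' : ℕ → ℕ) : Prop :=
  ∃ x y : ℕ, 1 ≤ x ∧ x ≤ n ∧ 1 ≤ y ∧ y ≤ n ∧ x ≠ y ∧
    (∀ t, u' t = u (Equiv.swap x y t)) ∧ invLen n u' = invLen n u + 1

/-- Bruhat order on permutations of `{1, …, n}`. -/
def Bruhat (n : ℕ) (u w : ℕ → ℕ) : Prop := Relation.ReflTransGen (BruhatCovers n) u w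

/-- `w` avoids the pattern `3412`. -/
def Covexillary (n : ℕ) (w : ℕ → ℕ) : Prop :=
  ¬ ∃ i1 i2 i3 i4, 1 ≤ i1 ∧ i1 < i2 ∧ i2 < i3 ∧ i3 < i4 ∧ i4 ≤ n ∧
      w i3 < w i4 ∧ w i4 < w i1 ∧ w i1 < w i2

/-- `r^v_{(i,j)}`: the number of points `(n - v(p) + 1, p)` of the graph of `v`
weakly southwest of the box `(i,j)`. -/
def rv (n : ℕ) (v : ℕ → ℕ) (i j : ℕ) : ℕ :=
  ((Finset.Icc 1 j).filter (fun p => n + 1 - v p ≤ i)).card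

/-- The diagram `D(w)` (in the paper's bottom-to-top convention). -/
def Dset (n : ℕ) (w : ℕ → ℕ) : Finset (ℕ × ℕ) :=
  ((Finset.Icc 1 n) ×ˢ (Finset.Icc 1 n)).filter
    (fun p => p.1 < n + 1 - w p.2 ∧ ∀ q ∈ Finset.Icc 1 n, w q = n + 1 - p.1 → p.2 < q)

/-- The essential set `E(w)`. -/
def Eset (n : ℕ) (w : ℕ → ℕ) : Finset (ℕ × ℕ) :=
  (Dset n w).filter (fun p => (p.1 + 1, p.2) ∉ Dset n w ∧ (p.1, p.2 + 1) ∉ Dset n w)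

/-- The multiset of sizes of the nonempty rows of `D(w)`; sorted decreasingly it
is the shape `λ(w)`. -/
def rowSizesD (n : ℕ) (w : ℕ → ℕ) : Multiset ℕ :=
  Multiset.filter (fun x => 0 < x)
    ((Finset.Icc 1 n).val.map (fun i => ((Dset n w).filter (fun p => p.1 = i)).card))

/-- The partition `λ(w)` as a decreasingly sorted list. -/
def lamListOf (n : ℕ) (w : ℕ → ℕ) : List ℕ :=
  ((rowSizesD n w).sort (· ≤ ·)).reverse

/-- `λ(w)_i` (1-indexed, `0` beyond the last part). -/
def lamOf (n : ℕ) (w : ℕ → ℕ) (i : ℕ) : ℕ := (lamListOf n w).getD (i - 1) 0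

/-- The number of parts `ℓ` of `λ(w)`. -/
def ellOf (n : ℕ) (w : ℕ → ℕ) : ℕ := (lamListOf n w).length

/-- Row `m` of `B(v,w)`, the smallest Young diagram containing `(1,1)` together
with every box `(i - r^v_e, j - r^v_e)` for `e = (i,j) ∈ E(w)`. -/
def Bfun (n : ℕ) (v w : ℕ → ℕ) (m : ℕ) : ℕ :=
  (insert ((1 : ℕ), (1 : ℕ)) ((Eset n w).image
      (fun e => (e.1 - rv n v e.1 e.2, e.2 - rv n v e.1 e.2)))).sup
    (fun p => if m ≤ p.1 then p.2 else 0)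

/-- The flag `b_i = max{m ≥ 1 : B(v,w)_m ≥ λ(w)_i + m - i}`. -/
def FlagOf (n : ℕ) (v w : ℕ → ℕ) (i : ℕ) : ℕ :=
  sSup {m : ℕ | 1 ≤ m ∧ (lamOf n w i : ℤ) + m - i ≤ (Bfun n v w m : ℤ)}

/-!
A Bruhat covering step `u ⋖ u ∘ (x y)` with `x < y` must have `u x < u y`: otherwise the
involution `swapPair` injects the inversions of `u ∘ (x y)` into those of `u`, and the length
could not go up. Moving the larger value to the left column `x` can only add graph points
weakly southwest of a box, so `r^v` grows along Bruhat order, giving (i). Each box of `B(v,w)`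
is a box of `E(w)` shifted diagonally by `r^v_e`, so smaller ranks give larger rows of `B`
(ii), and the flags are suprema of sets that grow with the rows of `B` (iii).
-/

def swapPair (x y : ℕ) (e : ℕ × ℕ) : ℕ × ℕ :=
  if Equiv.swap x y e.1 < Equiv.swap x y e.2 then Prod.map (Equiv.swap x y) (Equiv.swap x y) e
  else e

lemma swapPair_swapPair {x y : ℕ} {e : ℕ × ℕ} (he : e.1 < e.2) :
    swapPair x y (swapPair x y e) = e := by
  obtain ⟨p, q⟩ := e
  unfold swapPair
  split_ifs <;> simp_all

lemma invLen_comp_swap_le {n : ℕ} {u : ℕ → ℕ} {x y : ℕ} (hx : 1 ≤ x) (hxy : x < y) (hyn : y ≤ n)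
    (hu : u y ≤ u x) :
    invLen n (u ∘ Equiv.swap x y) ≤ invLen n u := by
  refine Finset.card_le_card_of_injOn (swapPair x y) ?_ ?_
  · rintro ⟨p, q⟩ hpq
    simp only [Finset.coe_filter, Finset.mem_product, Finset.mem_Icc, Set.mem_ofPred_eq,
      Function.comp_apply] at hpq ⊢
    simp only [swapPair, Equiv.swap_apply_def, Prod.map_apply] at hpq ⊢
    split_ifs at hpq ⊢ <;> dsimp only <;> subst_vars <;> omega
  · intro e he e' he' h
    simp only [Finset.coe_filter, Set.mem_ofPred_eq] at he he'
    rw [← swapPair_swapPair (x := x) (y := y) he.2.1, h, swapPair_swapPair he'.2.1]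

lemma rv_le_rv_comp_swap {n : ℕ} {u : ℕ → ℕ} {x y : ℕ} (hx : 1 ≤ x) (hxy : x < y)
    (hu : u x < u y) (i j : ℕ) : rv n u i j ≤ rv n (u ∘ Equiv.swap x y) i j := by
  unfold rv
  by_cases hyj : y ≤ j
  · refine (Finset.card_nbij' (Equiv.swap x y) (Equiv.swap x y) ?_ ?_
      (fun _ _ => Equiv.swap_apply_self _ _ _) (fun _ _ => Equiv.swap_apply_self _ _ _)).le
    all_goals
      intro p hp
      simp only [Finset.coe_filter, Finset.mem_Icc, Set.mem_ofPred_eq, Function.comp_apply,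
        Equiv.swap_apply_self] at hp ⊢
      exact ⟨by rw [Equiv.swap_apply_def]; split_ifs <;> omega, hp.2⟩
  · refine Finset.card_le_card fun p hp => ?_
    simp only [Finset.mem_filter, Finset.mem_Icc, Function.comp_apply] at hp ⊢
    rw [Equiv.swap_apply_def]
    split_ifs <;> subst_vars <;> omega

lemma BruhatCovers.rv_le {n : ℕ} {u u' : ℕ → ℕ} (h : BruhatCovers n u u') (i j : ℕ) :
    rv n u i j ≤ rv n u' i j := by
  obtain ⟨x, y, hx, hxn, hy, hyn, hxy, hu', hlen⟩ := h
  obtain rfl : u' = u ∘ Equiv.swap x y := funext hu'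
  wlog hlt : x < y generalizing x y
  · rw [Equiv.swap_comm] at hlen ⊢
    exact this y x hy hyn hx hxn hxy.symm (fun _ => rfl) hlen (by omega)
  have hu : u x < u y := by
    by_contra! hyx
    have := invLen_comp_swap_le hx hlt hyn hyx
    omega
  exact rv_le_rv_comp_swap hx hlt hu i j

lemma Bruhat.rv_le {n : ℕ} {u w : ℕ → ℕ} (h : Bruhat n u w) (i j : ℕ) :
    rv n u i j ≤ rv n w i j := by
  induction h with
  | refl => exact le_rfl
  | tail _ hcov ih => exact ih.trans (hcov.rv_le i j)

lemma Bfun_le_Bfun_of_rv_le {n : ℕ} {v' v w : ℕ → ℕ} (hrv : ∀ i j, rv n v' i j ≤ rv n v i j)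
    (m : ℕ) : Bfun n v w m ≤ Bfun n v' w m := by
  simp only [Bfun, Finset.sup_insert, Finset.sup_image]
  refine sup_le_sup_left (Finset.sup_mono_fun fun e _ => ?_) _
  have := hrv e.1 e.2
  simp only [Function.comp_apply]
  split_ifs <;> omega

lemma Bfun_eq_zero {n : ℕ} {v w : ℕ → ℕ} {m : ℕ} (hm : n + 1 < m) : Bfun n v w m = 0 := by
  refine Nat.le_zero.mp (Finset.sup_le fun p hp => ?_)
  simp only [Finset.mem_insert, Finset.mem_image, Eset, Dset, Finset.mem_filter,
    Finset.mem_product, Finset.mem_Icc] at hp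
  rcases hp with rfl | ⟨e, he, rfl⟩ <;> dsimp only <;> split_ifs <;> omega

lemma FlagOf_le_FlagOf_of_Bfun_le {n : ℕ} {v' v w : ℕ → ℕ}
    (hB : ∀ m, Bfun n v w m ≤ Bfun n v' w m) (i : ℕ) : FlagOf n v w i ≤ FlagOf n v' w i := by
  refine csSup_le_csSup' ⟨n + 1 + i, ?_⟩
    fun m ⟨hm1, hm⟩ => ⟨hm1, hm.trans (by exact_mod_cast hB m)⟩
  rintro m ⟨-, hm⟩
  by_contra! hlarge
  rw [Bfun_eq_zero (by omega)] at hm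
  push_cast at hm
  omega

theorem statement8_general (n : ℕ) (v' v w : ℕ → ℕ)
    (h1 : Bruhat n v' v) :
    (∀ i j, 1 ≤ i → i ≤ n → 1 ≤ j → j ≤ n → rv n v' i j ≤ rv n v i j) ∧
    (∀ m, 1 ≤ m → Bfun n v w m ≤ Bfun n v' w m) ∧
    (∀ i, 1 ≤ i → i ≤ ellOf n w → FlagOf n v w i ≤ FlagOf n v' w i) := by
  have hB : ∀ m, Bfun n v w m ≤ Bfun n v' w m := Bfun_le_Bfun_of_rv_le h1.rv_le
  exact ⟨fun i j _ _ _ _ => h1.rv_le i j, fun m _ => hB m,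
    fun i _ _ => FlagOf_le_FlagOf_of_Bfun_le hB i⟩

/-- For covexillary `w` and `v' ≤ v ≤ w` in Bruhat order:
(i) `r^{v'}_e ≤ r^v_e` for every box `e`; (ii) `B(v,w) ⊆ B(v',w)`; and
(iii) the corresponding flags satisfy `b_i ≤ b'_i` for `1 ≤ i ≤ ℓ`. -/
theorem statement8 (n : ℕ) (v' v w : ℕ → ℕ)
    (hv' : IsPermOn n v') (hv : IsPermOn n v) (hw : IsPermOn n w)
    (hcov : Covexillary n w)
    (h1 : Bruhat n v' v) (h2 : Bruhat n v w) :
    (∀ i j, 1 ≤ i → i ≤ n → 1 ≤ j → j ≤ n → rv n v' i j ≤ rv n v i j) ∧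
    (∀ m, 1 ≤ m → Bfun n v w m ≤ Bfun n v' w m) ∧
    (∀ i, 1 ≤ i → i ≤ ellOf n w → FlagOf n v w i ≤ FlagOf n v' w i) :=
  statement8_general n v' v w h1

end DriftKL
end
end

section
/- Let λ be a Young diagram, b a flag vector, and T∈SSYT(λ,b) a flagged semistandard tableau that satisfies the recursion T(i,j)=min{T(i+1,j)−1, T(i−1,j+1)+1} at every box of λ that is not a northeast corner. Then for any two special boxes (i,j) and (i',j') of λ with i≤i' and j≤j', one has T(top(j),j) − top(j) ≤ T(top(j'),j') − top(j'). -/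
open scoped Classical

noncomputable section

namespace DriftKL

/-- The extension of a filling `T` of `λ` by `T(i,j) = ∞` if (`i > 0` and
`(i,j) ∉ λ`) or `j > λ₁`, and `T(0,j) = 0` for `1 ≤ j ≤ λ₁`. -/
def extT (lam : ℕ → ℕ) (T : ℕ → ℕ → ℕ) (i j : ℕ) : ℕ∞ :=
  if lam 1 < j then ⊤
  else if i = 0 then 0
  else if InShape lam i j then (T i j : ℕ∞) else ⊤

/-- `T` satisfies the recursion `T(i,j) = min{T(i+1,j) - 1, T(i-1,j+1) + 1}`
at the box `(i,j)` (with the extension conventions). -/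
def RecursionAt (lam : ℕ → ℕ) (T : ℕ → ℕ → ℕ) (i j : ℕ) : Prop :=
  (T i j : ℕ∞) = min (extT lam T (i + 1) j - 1) (extT lam T (i - 1) (j + 1) + 1)

/-- `(i,j)` is a northeast corner of `λ`. -/
def NECorner (lam : ℕ → ℕ) (i j : ℕ) : Prop :=
  InShape lam i j ∧ ¬ InShape lam (i + 1) j ∧ ¬ InShape lam i (j + 1)

/-- `top(j)`: the largest `i` with `(i,j) ∈ λ` (`0` if the column is empty). -/
def colTop (lam : ℕ → ℕ) (j : ℕ) : ℕ := sSup {i | InShape lam i j}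

/-- `|arm(i,j)|`. -/
def armLen (lam : ℕ → ℕ) (i j : ℕ) : ℕ := lam i - j

/-- `|leg(i,j)|`. -/
def legLen (lam : ℕ → ℕ) (i j : ℕ) : ℕ := colTop lam j - i

/-- `(p,q)` lies in `{(i,j)} ∪ arm(i,j) ∪ leg(i,j)`. -/
def InCross (lam : ℕ → ℕ) (i j p q : ℕ) : Prop :=
  (p = i ∧ j ≤ q ∧ q ≤ lam i) ∨ (q = j ∧ i ≤ p ∧ p ≤ colTop lam j)

/-- `(i,j) ∈ λ`, has equal arm and leg lengths, and no box of its cross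
satisfies `Prev` (the "already special" predicate). -/
def CandAt (lam : ℕ → ℕ) (Prev : ℕ → ℕ → Prop) (i j : ℕ) : Prop :=
  InShape lam i j ∧ armLen lam i j = legLen lam i j ∧
    ∀ p q, InCross lam i j p q → ¬ Prev p q

/-- `SpecialLevels lam z i j` holds iff `(i,j)` is `y`-special for some `y < z`:
a `z`-special box is one which is maximal (componentwise) among candidates
relative to the boxes that are `y`-special for `y < z`. -/
def SpecialLevels (lam : ℕ → ℕ) : ℕ → ℕ → ℕ → Prop
  | 0 => fun _ _ => False
  | z + 1 => fun i j =>
      SpecialLevels lam z i j ∨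
        (CandAt lam (SpecialLevels lam z) i j ∧
          ∀ p q, CandAt lam (SpecialLevels lam z) p q → i ≤ p → j ≤ q → i = p ∧ j = q)

/-- `(i,j)` is special, i.e. `z`-special for some `z`. -/
def IsSpecial (lam : ℕ → ℕ) (i j : ℕ) : Prop := ∃ z, SpecialLevels lam z i j

/-- The flag `b_i = max{m ≥ 1 : B_m ≥ λ_i + m - i}` attached to partitions `λ ⊆ B`. -/
def flagOfPart (lam B : ℕ → ℕ) (i : ℕ) : ℕ :=
  sSup {m : ℕ | 1 ≤ m ∧ (lam i : ℤ) + m - i ≤ (B m : ℤ)}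

/-! Write `s = λ_i + i` for a special box `(i,j)`. Arm and leg of `(i,j)` having equal length
says that the top `(top(j), j)` of column `j` lies on the antidiagonal `a + b = s`, and
maximality of special boxes forces every row `r` of the leg above `i` to reach beyond it,
`λ_r + r > s`. Hence the boxes of the antidiagonal `a + b = s + 1` lying in columns
`j < q ≤ j'` belong to `λ`. Along the antidiagonal `a + b = s` the recursion gives
`T(a + 1, b) ≤ T(a, b + 1) + 1`, so `T(a, b) - a` does not decrease when one walks from
`(top(j), j)` down to row `top(j')`, and then along that row to `(top(j'), j')`. -/

section Shape

variable {ℓ : ℕ} {lam : ℕ → ℕ}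

theorem IsPartitionFun.antitone (hlam : IsPartitionFun ℓ lam) {a b : ℕ} (ha : 1 ≤ a)
    (hab : a ≤ b) : lam b ≤ lam a := by
  by_cases hb : b ≤ ℓ
  · exact hlam.2.1 a b ha hab hb
  · rw [hlam.2.2 b (Or.inr (by omega))]
    exact Nat.zero_le _

theorem IsPartitionFun.inShape_of_le (hlam : IsPartitionFun ℓ lam) {i i' j : ℕ}
    (h : InShape lam i j) (hi' : 1 ≤ i') (hii : i' ≤ i) : InShape lam i' j :=
  ⟨hi', h.2.1, h.2.2.trans (hlam.antitone hi' hii)⟩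

theorem IsPartitionFun.bddAbove_column (hlam : IsPartitionFun ℓ lam) (j : ℕ) :
    BddAbove {i | InShape lam i j} := by
  refine ⟨ℓ, fun i ⟨_, hj, hji⟩ => ?_⟩
  by_contra hi
  rw [hlam.2.2 i (Or.inr (by omega))] at hji
  omega

theorem IsPartitionFun.le_colTop (hlam : IsPartitionFun ℓ lam) {i j : ℕ}
    (h : InShape lam i j) : i ≤ colTop lam j :=
  le_csSup (hlam.bddAbove_column j) h

theorem IsPartitionFun.inShape_colTop (hlam : IsPartitionFun ℓ lam) {i j : ℕ}
    (h : InShape lam i j) : InShape lam (colTop lam j) j :=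
  Nat.sSup_mem ⟨i, h⟩ (hlam.bddAbove_column j)

theorem IsPartitionFun.le_lam_iff_le_colTop (hlam : IsPartitionFun ℓ lam) {i j : ℕ}
    (hi : 1 ≤ i) (hj : 1 ≤ j) : j ≤ lam i ↔ i ≤ colTop lam j := by
  refine ⟨fun h => hlam.le_colTop ⟨hi, hj, h⟩, fun h => ?_⟩
  have hne : {p | InShape lam p j}.Nonempty := by
    by_contra hempty
    rw [Set.not_nonempty_iff_eq_empty] at hempty
    simp only [colTop, hempty, csSup_empty, bot_eq_zero', nonpos_iff_eq_zero] at h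
    omega
  obtain ⟨p, hp⟩ := hne
  exact (hlam.inShape_of_le (hlam.inShape_colTop hp) hi h).2.2

theorem IsPartitionFun.colTop_eq (hlam : IsPartitionFun ℓ lam) {v c : ℕ} (hv : 1 ≤ v)
    (hc : c ≤ lam v) (hc' : lam (v + 1) < c) : colTop lam c = v := by
  refine le_antisymm ?_ ((hlam.le_lam_iff_le_colTop hv (by omega)).mp hc)
  by_contra! hlt
  have := (hlam.le_lam_iff_le_colTop (by omega) (by omega)).mpr (show v + 1 ≤ _ from hlt)
  omega

theorem IsPartitionFun.lam_colTop_succ_lt (hlam : IsPartitionFun ℓ lam) {q : ℕ}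
    (hq : 1 ≤ q) : lam (colTop lam q + 1) < q := by
  by_contra! h
  have := (hlam.le_lam_iff_le_colTop (by omega) hq).mp h
  omega

theorem IsPartitionFun.armLen_eq_legLen_iff (hlam : IsPartitionFun ℓ lam) {p q : ℕ}
    (h : InShape lam p q) : armLen lam p q = legLen lam p q ↔ lam p + p = colTop lam q + q := by
  have := hlam.le_colTop h
  have := h.2.2
  unfold armLen legLen
  omega

end Shape

section Matched

variable {ℓ : ℕ} {lam : ℕ → ℕ}

/-- The ends of the arm and of the leg of `(p, q)` lie on one antidiagonal, and every row of the
leg above `p` ends strictly beyond that antidiagonal. -/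
def IsMatched (lam : ℕ → ℕ) (p q : ℕ) : Prop :=
  InShape lam p q ∧ lam p + p = colTop lam q + q ∧
    ∀ r, p < r → r ≤ colTop lam q → lam p + p < lam r + r

/-- If `(p, q)` has arm and leg of equal length, the matched box is `(p, s - v)`, where
`s = λ_p + p` and `v ≥ p` is the first row with `λ_(v+1) + (v + 1) ≤ s`; `v = top(q)` qualifies. -/
theorem IsPartitionFun.exists_isMatched (hlam : IsPartitionFun ℓ lam) {p q : ℕ}
    (hin : InShape lam p q) (hh : lam p + p = colTop lam q + q) :
    ∃ c, q ≤ c ∧ IsMatched lam p c := by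
  have hP : ∃ v, p ≤ v ∧ lam (v + 1) + (v + 1) ≤ lam p + p :=
    ⟨colTop lam q, hlam.le_colTop hin, by have := hlam.lam_colTop_succ_lt hin.2.1; omega⟩
  set v := Nat.find hP
  obtain ⟨hpv, hv⟩ : p ≤ v ∧ lam (v + 1) + (v + 1) ≤ lam p + p := Nat.find_spec hP
  have hvq : v ≤ colTop lam q := Nat.find_min' hP ⟨hlam.le_colTop hin, by
    have := hlam.lam_colTop_succ_lt hin.2.1; omega⟩
  have hrows : ∀ r, p < r → r ≤ v → lam p + p < lam r + r := by
    intro r hpr hrv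
    have hmin := Nat.find_min hP (show r - 1 < v by omega)
    rw [not_and, Nat.sub_add_cancel (by omega)] at hmin
    exact lt_of_not_ge (hmin (by omega))
  have hlamv : lam p + p - v ≤ lam v := by
    rcases hpv.eq_or_lt with hpv | hpv
    · rw [← hpv]; omega
    · have := hrows v hpv le_rfl; omega
  have htop : colTop lam (lam p + p - v) = v :=
    hlam.colTop_eq (hin.1.trans hpv) hlamv (by omega)
  refine ⟨lam p + p - v, by omega, ⟨hin.1, by omega, by omega⟩, by omega, ?_⟩
  rw [htop]
  exact hrows

theorem IsPartitionFun.candAt_of_isMatched (hlam : IsPartitionFun ℓ lam) {Prev : ℕ → ℕ → Prop}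
    (hPrev : ∀ x y, Prev x y → IsMatched lam x y) {p q c : ℕ} (hcand : CandAt lam Prev p q)
    (hqc : q ≤ c) (hc : IsMatched lam p c) : CandAt lam Prev p c := by
  obtain ⟨hpc, hdiag, hrows⟩ := hc
  refine ⟨hpc, (hlam.armLen_eq_legLen_iff hpc).mpr hdiag, ?_⟩
  rintro x y (⟨rfl, hcy, hyp⟩ | ⟨rfl, hpx, hxc⟩) hx
  · exact hcand.2.2 _ _ (Or.inl ⟨rfl, hqc.trans hcy, hyp⟩) hx
  · have hxdiag := (hPrev _ _ hx).2.1
    rcases hpx.eq_or_lt with rfl | hpx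
    · exact hcand.2.2 _ _ (Or.inl ⟨rfl, hqc, hpc.2.2⟩) hx
    · have := hrows x hpx hxc
      omega

theorem IsPartitionFun.isMatched_of_specialLevels (hlam : IsPartitionFun ℓ lam) :
    ∀ z p q, SpecialLevels lam z p q → IsMatched lam p q := by
  intro z
  induction z with
  | zero => exact fun _ _ h => h.elim
  | succ z ih =>
    rintro p q (h | ⟨hcand, hmax⟩)
    · exact ih p q h
    · have hin := hcand.1
      obtain ⟨c, hqc, hc⟩ :=
        hlam.exists_isMatched hin ((hlam.armLen_eq_legLen_iff hin).mp hcand.2.1)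
      obtain ⟨-, rfl⟩ := hmax p c (hlam.candAt_of_isMatched ih hcand hqc hc) le_rfl hqc
      exact hc

theorem IsPartitionFun.isMatched_of_isSpecial (hlam : IsPartitionFun ℓ lam) {p q : ℕ}
    (h : IsSpecial lam p q) : IsMatched lam p q :=
  h.elim fun z hz => hlam.isMatched_of_specialLevels z p q hz

theorem IsPartitionFun.lt_colTop_add_of_isMatched (hlam : IsPartitionFun ℓ lam)
    {i j i' j' q : ℕ} (hm : IsMatched lam i j) (hin' : InShape lam i' j') (hii : i ≤ i')
    (hjq : j < q) (hqj : q ≤ j') : lam i + i < colTop lam q + q := by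
  obtain ⟨hin, hdiag, hrows⟩ := hm
  by_cases hri : lam i + i + 1 ≤ q + i'
  · have := hlam.le_colTop (⟨hin'.1, by omega, hqj.trans hin'.2.2⟩ : InShape lam i' q)
    omega
  · obtain ⟨r, hr⟩ : ∃ r, r + q = lam i + i + 1 := ⟨lam i + i + 1 - q, by omega⟩
    have := hrows r (by omega) (by omega)
    have := (hlam.le_lam_iff_le_colTop (i := r) (j := q) (by omega) (by omega)).mp (by omega)
    omega

end Matched

section Tableau

variable {ℓ : ℕ} {lam : ℕ → ℕ} {T : ℕ → ℕ → ℕ}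

theorem IsSSYT.row_le (hT : IsSSYT lam T) {r q q' : ℕ} (hq : 1 ≤ q) (hqq : q ≤ q')
    (h : InShape lam r q') : T r q ≤ T r q' := by
  induction q', hqq using Nat.le_induction with
  | base => exact le_rfl
  | succ k hk ih =>
    have hk' : InShape lam r k := ⟨h.1, by omega, by have := h.2.2; omega⟩
    exact (ih hk').trans (hT.2.1 r k hk' h)

theorem IsPartitionFun.le_southeast_add_one (hlam : IsPartitionFun ℓ lam)
    (hrec : ∀ i j, InShape lam i j → ¬ NECorner lam i j → RecursionAt lam T i j)
    {r q : ℕ} (hr : 1 ≤ r) (hq : 1 ≤ q) (h : InShape lam (r + 1) (q + 1)) :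
    T (r + 1) q ≤ T r (q + 1) + 1 := by
  have hin : InShape lam (r + 1) q := ⟨h.1, hq, by have := h.2.2; omega⟩
  have hse : InShape lam r (q + 1) := hlam.inShape_of_le h hr (by omega)
  have hext : extT lam T r (q + 1) = T r (q + 1) := by
    have : q + 1 ≤ lam 1 := hse.2.2.trans (hlam.antitone le_rfl hr)
    rw [extT, if_neg (by omega), if_neg (by omega), if_pos hse]
  have hrec' := hrec (r + 1) q hin fun hcorner => hcorner.2.2 h
  rw [RecursionAt, Nat.add_sub_cancel, hext] at hrec'
  exact_mod_cast hrec'.trans_le (min_le_right _ _)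

/-- `hbox` asks for the right neighbour of every box of the walk
`(r + n, q), (r + n - 1, q + 1), …, (r + 1, q + n - 1)`. -/
theorem IsPartitionFun.sub_le_of_antidiagonal (hlam : IsPartitionFun ℓ lam)
    (hrec : ∀ i j, InShape lam i j → ¬ NECorner lam i j → RecursionAt lam T i j)
    {r q n : ℕ} (hr : 1 ≤ r) (hq : 1 ≤ q)
    (hbox : ∀ m < n, InShape lam (r + m + 1) (q + n - m)) :
    (T (r + n) q : ℤ) - ↑(r + n) ≤ T r (q + n) - r := by
  induction n generalizing q with
  | zero => simp
  | succ n ih =>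
    have hstep := hlam.le_southeast_add_one hrec (r := r + n) (q := q) (by omega) hq
      (by convert hbox n (by omega) using 2; omega)
    have hrest := ih (q := q + 1) (by omega)
      (fun m hm => by convert hbox m (by omega) using 2; omega)
    rw [show q + 1 + n = q + (n + 1) by omega] at hrest
    rw [← add_assoc]
    push_cast at hstep hrest ⊢
    omega

end Tableau

/-- If `T ∈ SSYT(λ,b)` satisfies the recursion at every
non-northeast-corner box, then for special boxes `(i,j)`, `(i',j')` with
`i ≤ i'` and `j ≤ j'` one has
`T(top(j),j) - top(j) ≤ T(top(j'),j') - top(j')`. -/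
theorem statement12 (ℓ : ℕ) (lam b : ℕ → ℕ)
    (hlam : IsPartitionFun ℓ lam)
    (T : ℕ → ℕ → ℕ) (hT : T ∈ SSYTset lam b)
    (hrec : ∀ i j, InShape lam i j → ¬ NECorner lam i j → RecursionAt lam T i j)
    (i j i' j' : ℕ)
    (hs : IsSpecial lam i j) (hs' : IsSpecial lam i' j')
    (hii : i ≤ i') (hjj : j ≤ j') :
    (T (colTop lam j) j : ℤ) - (colTop lam j : ℤ)
      ≤ (T (colTop lam j') j' : ℤ) - (colTop lam j' : ℤ) := by
  rcases hjj.eq_or_lt with rfl | hjj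
  · exact le_rfl
  have hm := hlam.isMatched_of_isSpecial hs
  have hin' := (hlam.isMatched_of_isSpecial hs').1
  have hbeyond : ∀ q, j < q → q ≤ j' → colTop lam j + j < colTop lam q + q := fun q hjq hqj =>
    hm.2.1 ▸ hlam.lt_colTop_add_of_isMatched hm hin' hii hjq hqj
  have htop' := hlam.inShape_colTop hin'
  have htop := hlam.inShape_colTop hm.1
  obtain ⟨n, hn⟩ : ∃ n, colTop lam j = colTop lam j' + n :=
    ⟨colTop lam j - colTop lam j', by
      have := hlam.le_colTop (⟨htop'.1, htop.2.1, hjj.le.trans htop'.2.2⟩ : InShape lam _ j)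
      omega⟩
  have hnj : j + n < j' := by have := hbeyond j' hjj le_rfl; omega
  have hdiag := hlam.sub_le_of_antidiagonal hrec (r := colTop lam j') (q := j) (n := n)
    htop'.1 htop.2.1 fun m hmn => by
      have := hbeyond (j + n - m) (by omega) (by omega)
      exact ⟨by omega, by omega, (hlam.le_lam_iff_le_colTop (by omega) (by omega)).mpr (by omega)⟩
  have hrow := hT.1.row_le (le_add_right htop.2.1) hnj.le htop'
  rw [← hn] at hdiag
  omega

end DriftKL
end
end
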